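/- arXiv:1510.07440 — 2 statements merged into one kernel-verified Lean document; each statement's English description precedes it below -/
import Mathlib

section
/- For every natural number k ≥ 1, the ring ℤ/3^kℤ of integers modulo 3^k is weak nil clean but not nil clean. -/
/-!
Modulo 3 every residue is 0, 1 or -1, and the kernel of `ZMod (3 ^ k) → ZMod 3` is nil, so every
element of `ZMod (3 ^ k)` is a nilpotent plus 0, plus 1 or minus 1. Nil cleanness passes to
quotients, and in the field `ZMod 3` it would force `2 ∈ {0, 1}`.
-/

/-- A ring is weak nil clean if every element is the sum or difference of a
nilpotent and an idempotent. -/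
def WeakNilClean (R : Type*) [Ring R] : Prop :=
  ∀ x : R, ∃ n e : R, IsNilpotent n ∧ IsIdempotentElem e ∧ (x = n + e ∨ x = n - e)

/-- A ring is nil clean if every element is the sum of a nilpotent and an idempotent. -/
def NilClean (R : Type*) [Ring R] : Prop :=
  ∀ x : R, ∃ n e : R, IsNilpotent n ∧ IsIdempotentElem e ∧ x = n + e

lemma weakNilClean_of_forall_isNilpotent {R : Type*} [Ring R]
    (h : ∀ x : R, IsNilpotent x ∨ IsNilpotent (x - 1) ∨ IsNilpotent (x + 1)) :
    WeakNilClean R := by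
  intro x
  rcases h x with hx | hx | hx
  · exact ⟨x, 0, hx, .zero, .inl (add_zero x).symm⟩
  · exact ⟨x - 1, 1, hx, .one, .inl (sub_add_cancel x 1).symm⟩
  · exact ⟨x + 1, 1, hx, .one, .inr (add_sub_cancel_right x 1).symm⟩

lemma NilClean.of_surjective {R S : Type*} [Ring R] [Ring S] (f : R →+* S)
    (hf : Function.Surjective f) (h : NilClean R) : NilClean S := by
  intro y
  obtain ⟨x, rfl⟩ := hf y
  obtain ⟨n, e, hn, he, rfl⟩ := h x
  exact ⟨f n, f e, hn.map f, he.map f, map_add f n e⟩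

lemma NilClean.eq_zero_or_eq_one {R : Type*} [Ring R] [NoZeroDivisors R] (h : NilClean R)
    (x : R) : x = 0 ∨ x = 1 := by
  obtain ⟨n, e, hn, he, rfl⟩ := h x
  rwa [hn.eq_zero, zero_add, ← IsIdempotentElem.iff_eq_zero_or_one]

lemma ZMod.not_nilClean_three : ¬ NilClean (ZMod 3) := fun h ↦ by
  rcases h.eq_zero_or_eq_one 2 with h2 | h2 <;> revert h2 <;> decide

lemma ZMod.isNilpotent_of_castHom_eq_zero {m n j : ℕ} (hnm : n ∣ m) (hm : m ∣ n ^ j)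
    {x : ZMod m} (hx : ZMod.castHom hnm (ZMod n) x = 0) : IsNilpotent x := by
  rw [← ZMod.intCast_zmod_cast x, map_intCast, ZMod.intCast_zmod_eq_zero_iff_dvd] at hx
  obtain ⟨c, hc⟩ := hx
  refine ⟨j, ?_⟩
  rw [← ZMod.intCast_zmod_cast x, hc, Int.cast_mul, mul_pow, Int.cast_natCast,
    ← Nat.cast_pow, (ZMod.natCast_eq_zero_iff _ _).mpr hm, zero_mul]

lemma ZMod.isNilpotent_or_sub_one_or_add_one_of_three_pow {k : ℕ} (hk : k ≠ 0)
    (x : ZMod (3 ^ k)) : IsNilpotent x ∨ IsNilpotent (x - 1) ∨ IsNilpotent (x + 1) := by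
  let f := ZMod.castHom (dvd_pow_self 3 hk) (ZMod 3)
  have hker {y : ZMod (3 ^ k)} (hy : f y = 0) : IsNilpotent y :=
    ZMod.isNilpotent_of_castHom_eq_zero _ (dvd_refl (3 ^ k)) hy
  have hres : ∀ z : ZMod 3, z = 0 ∨ z - 1 = 0 ∨ z + 1 = 0 := by decide
  rcases hres (f x) with h | h | h
  · exact .inl (hker h)
  · exact .inr (.inl (hker (by rwa [map_sub, map_one])))
  · exact .inr (.inr (hker (by rwa [map_add, map_one])))

theorem stmt_5 (k : ℕ) (hk : 1 ≤ k) :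
    WeakNilClean (ZMod (3 ^ k)) ∧ ¬ NilClean (ZMod (3 ^ k)) := by
  have hk0 : k ≠ 0 := Nat.one_le_iff_ne_zero.mp hk
  refine ⟨weakNilClean_of_forall_isNilpotent
    (ZMod.isNilpotent_or_sub_one_or_add_one_of_three_pow hk0), fun h ↦ ?_⟩
  let f := ZMod.castHom (dvd_pow_self 3 hk0) (ZMod 3)
  exact ZMod.not_nilClean_three (h.of_surjective f (ZMod.ringHom_surjective f))
end

section
/- Let R be a weak* nil clean ring and f ∈ R an idempotent. Then the corner ring fRf is weak* nil clean: for every x ∈ R with x = fxf, there exist n, e ∈ R with fnf = n, fef = e, n nilpotent, e² = e, ne = en, and x = n + e or x = n - e. -/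
/-!
If `x = n ± e` with `n` nilpotent, `e` idempotent and `ne = en`, then `±x - (±x)²` is nilpotent.
Conversely, if `(x - x²)ᴹ = 0` then `e = 1 - (1 - xᴹ)ᴹ` is idempotent and `x - e` is nilpotent,
because `X(1 - X)` divides `X - (1 - (1 - Xᴹ)ᴹ)` in `ℤ[X]`. Both `e` and `x - e` are polynomials
in `x` without constant term, so they lie in `fRf` whenever `x` does.
-/

open Polynomial

/-- A ring is weak* nil clean if every element is the sum or difference of a
nilpotent and an idempotent which commute with each other. -/
def WeakStarNilClean (R : Type*) [Ring R] : Prop :=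
  ∀ x : R, ∃ n e : R, IsNilpotent n ∧ IsIdempotentElem e ∧ n * e = e * n ∧
    (x = n + e ∨ x = n - e)

theorem X_dvd_one_sub_one_sub_X_pow_pow {M : ℕ} (hM : M ≠ 0) :
    (X : ℤ[X]) ∣ 1 - (1 - X ^ M) ^ M := by
  have := sub_dvd_pow_sub_pow (1 : ℤ[X]) (1 - X ^ M) M
  rw [sub_sub_cancel, one_pow] at this
  exact (dvd_pow_self X hM).trans this

theorem one_sub_X_dvd_one_sub_X_pow_pow {M : ℕ} (hM : M ≠ 0) :
    (1 - X : ℤ[X]) ∣ (1 - X ^ M) ^ M := by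
  have := sub_dvd_pow_sub_pow (1 : ℤ[X]) X M
  rw [one_pow] at this
  exact this.trans (dvd_pow_self _ hM)

theorem X_mul_one_sub_X_dvd_X_sub_one_sub_one_sub_X_pow_pow {M : ℕ} (hM : M ≠ 0) :
    (X * (1 - X) : ℤ[X]) ∣ X - (1 - (1 - X ^ M) ^ M) := by
  have hcop : IsCoprime (X : ℤ[X]) (1 - X) := ⟨1, 1, by ring⟩
  refine hcop.mul_dvd (dvd_sub dvd_rfl (X_dvd_one_sub_one_sub_X_pow_pow hM)) ?_
  rw [show (X : ℤ[X]) - (1 - (1 - X ^ M) ^ M) = (1 - X ^ M) ^ M - (1 - X) by ring]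
  exact dvd_sub (one_sub_X_dvd_one_sub_X_pow_pow hM) dvd_rfl

section

variable {R : Type*} [Ring R]

theorem exists_isIdempotentElem_isNilpotent_sub_of_isNilpotent_sub_sq {x : R}
    (hx : IsNilpotent (x - x ^ 2)) :
    ∃ q : ℤ[X], IsIdempotentElem (aeval x (X * q)) ∧ IsNilpotent (x - aeval x (X * q)) := by
  obtain ⟨m, hm⟩ := hx
  obtain ⟨M, hM0, hM⟩ : ∃ M, M ≠ 0 ∧ (x - x ^ 2) ^ M = 0 :=
    ⟨m + 1, m.succ_ne_zero, pow_eq_zero_of_le m.le_succ hm⟩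
  obtain ⟨q, hq⟩ := X_dvd_one_sub_one_sub_X_pow_pow hM0
  obtain ⟨k, hk⟩ := X_mul_one_sub_X_dvd_X_sub_one_sub_one_sub_X_pow_pow hM0
  refine ⟨q, ?_, M, ?_⟩ <;> rw [← hq]
  · simpa using isIdempotentElem_one_sub_one_sub_pow_pow x M hM
  calc (x - aeval x (1 - (1 - X ^ M) ^ M : ℤ[X])) ^ M
      = aeval x ((X - (1 - (1 - X ^ M) ^ M) : ℤ[X]) ^ M) := by simp
    _ = (x - x ^ 2) ^ M * aeval x k ^ M := by rw [hk]; simp [mul_pow, mul_one_sub, sq]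
    _ = 0 := by rw [hM, zero_mul]

theorem isNilpotent_add_sub_sq {n e : R} (hn : IsNilpotent n) (he : IsIdempotentElem e)
    (hne : Commute n e) : IsNilpotent ((n + e) - (n + e) ^ 2) := by
  have hfactor : (n + e) - (n + e) ^ 2 = n * (1 - n - (e + e)) := by
    rw [sq, add_mul, mul_add, mul_add, he.eq, ← hne.eq]
    noncomm_ring
  rw [hfactor]
  exact (((Commute.one_right n).sub_right (Commute.refl n)).sub_right
    (hne.add_right hne)).isNilpotent_mul_right hn

theorem aeval_X_mul_mem_corner {f x : R} (hf : IsIdempotentElem f) (hx : x = f * x * f)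
    (p : ℤ[X]) : f * aeval x (X * p) * f = aeval x (X * p) := by
  have hfx : f * x = x := by rw [hx, ← mul_assoc, ← mul_assoc, hf.eq]
  have hxf : x * f = x := by rw [hx, mul_assoc _ f f, hf.eq]
  have hleft : aeval x (X * p) = x * aeval x p := by rw [map_mul, aeval_X]
  have hright : aeval x (X * p) = aeval x p * x := by rw [mul_comm, map_mul, aeval_X]
  calc f * aeval x (X * p) * f = f * x * aeval x p * f := by rw [hleft, mul_assoc f x]
    _ = aeval x p * x * f := by rw [hfx, ← hleft, hright]
    _ = aeval x (X * p) := by rw [mul_assoc, hxf, hright]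

theorem exists_isNilpotent_add_isIdempotentElem_in_corner {f x : R} (hf : IsIdempotentElem f)
    (hx : x = f * x * f) (hnil : IsNilpotent (x - x ^ 2)) :
    ∃ n e : R, f * n * f = n ∧ f * e * f = e ∧ IsNilpotent n ∧
      IsIdempotentElem e ∧ n * e = e * n ∧ x = n + e := by
  obtain ⟨q, he, hn⟩ := exists_isIdempotentElem_isNilpotent_sub_of_isNilpotent_sub_sq hnil
  have hn_eq : x - aeval x (X * q) = aeval x (X * (1 - q)) := by simp [mul_sub]
  rw [hn_eq] at hn
  refine ⟨_, _, aeval_X_mul_mem_corner hf hx _, aeval_X_mul_mem_corner hf hx _, hn, he,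
    ((Commute.all (X * (1 - q)) (X * q)).map (aeval x : ℤ[X] →ₐ[ℤ] R)).eq, ?_⟩
  rw [← hn_eq, sub_add_cancel]

end

theorem stmt_11 {R : Type*} [Ring R] (hR : WeakStarNilClean R)
    (f : R) (hf : IsIdempotentElem f) :
    ∀ x : R, x = f * x * f →
      ∃ n e : R, f * n * f = n ∧ f * e * f = e ∧ IsNilpotent n ∧
        IsIdempotentElem e ∧ n * e = e * n ∧ (x = n + e ∨ x = n - e) := by
  intro x hx
  obtain ⟨n, e, hn, he, hne, hsum | hdiff⟩ := hR x
  · obtain ⟨n', e', hn'f, he'f, hn', he', hn'e', hsum'⟩ :=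
      exists_isNilpotent_add_isIdempotentElem_in_corner hf hx
        (hsum ▸ isNilpotent_add_sub_sq hn he hne)
    exact ⟨n', e', hn'f, he'f, hn', he', hn'e', Or.inl hsum'⟩
  · have hx' : -x = f * -x * f := by rw [mul_neg, neg_mul, ← hx]
    have hneg : -x = -n + e := by rw [hdiff, neg_sub, neg_add_eq_sub]
    obtain ⟨n', e', hn'f, he'f, hn', he', hn'e', hsum'⟩ :=
      exists_isNilpotent_add_isIdempotentElem_in_corner hf hx'
        (hneg ▸ isNilpotent_add_sub_sq hn.neg he (Commute.neg_left hne))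
    refine ⟨-n', e', by rw [mul_neg, neg_mul, hn'f], he'f, hn'.neg, he',
      by rw [neg_mul, hn'e', mul_neg], Or.inr ?_⟩
    rw [← neg_neg x, hsum', neg_add, sub_eq_add_neg]
end
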